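/- Let $\theta_*, \theta_{t-1}, x_t \in \mathbb{R}^d$, let $V_{t-1}$ be symmetric positive definite, $\eta > 0$ with $\eta \|x_t\|^2_{V_{t-1}^{-1}} \leq 1$. Define $A_t = \eta V_{t-1}^{-1}$ (acting on $x_t$), $V_t = V_{t-1} + \eta x_t x_t^\top$. Then $\|(I - \eta V_{t-1}^{-1} x_t x_t^\top)(\theta_{t-1} - \theta_*)\|^2_{V_t} \leq \|\theta_{t-1} - \theta_*\|^2_{V_{t-1}}$, where $\|u\|^2_A = u^\top A u$. -/

import Mathlib

/-!
With `w = V⁻¹ x` and `a = xᵀ u`, the map sends `u` to `u - η a w`. Since `V w = x`, the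
quadratic form of the rank-one update `V + η x xᵀ` at this point equals
`‖u‖²_V - η a² (1 + t - t²)` with `t = η ‖x‖²_{V⁻¹}`, and `1 + t - t² ≥ 0` for `t ∈ [0, 1]`.
-/

open Matrix

namespace Matrix

variable {n R : Type*} [Fintype n] [CommRing R]

theorem one_sub_smul_mul_vecMulVec_mulVec [DecidableEq n] (η : R) (M : Matrix n n R)
    (x y u : n → R) :
    ((1 : Matrix n n R) - η • (M * vecMulVec x y)) *ᵥ u = u - (η * (y ⬝ᵥ u)) • (M *ᵥ x) := by
  rw [mul_vecMulVec, sub_mulVec, one_mulVec, smul_mulVec, vecMulVec_mulVec, op_smul_eq_smul,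
    smul_smul]

theorem dotProduct_add_smul_vecMulVec_mulVec (V : Matrix n n R) (η : R) (x v : n → R) :
    v ⬝ᵥ (V + η • vecMulVec x x) *ᵥ v = v ⬝ᵥ V *ᵥ v + η * (x ⬝ᵥ v) ^ 2 := by
  rw [add_mulVec, smul_mulVec, vecMulVec_mulVec, op_smul_eq_smul, dotProduct_add,
    dotProduct_smul, dotProduct_smul, dotProduct_comm v x, smul_eq_mul, smul_eq_mul]
  ring

theorem sub_smul_dotProduct_mulVec_sub_smul {V : Matrix n n R} (hV : V.IsSymm) {w x : n → R}
    (hVw : V *ᵥ w = x) (c : R) (u : n → R) :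
    (u - c • w) ⬝ᵥ V *ᵥ (u - c • w) =
      u ⬝ᵥ V *ᵥ u - 2 * c * (x ⬝ᵥ u) + c ^ 2 * (x ⬝ᵥ w) := by
  have hwV : w ⬝ᵥ V *ᵥ u = x ⬝ᵥ u := by
    rw [dotProduct_mulVec, ← mulVec_transpose, hV.eq, hVw, dotProduct_comm]
  rw [mulVec_sub, mulVec_smul, hVw]
  simp only [dotProduct_sub, sub_dotProduct, dotProduct_smul, smul_dotProduct, smul_eq_mul, hwV,
    dotProduct_comm u x, dotProduct_comm w x]
  ring

end Matrix

theorem stmt_11 {d : ℕ} (θs θ x : Fin d → ℝ) (V : Matrix (Fin d) (Fin d) ℝ)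
    (hV : V.PosDef) (η : ℝ) (hη : 0 < η)
    (hq : η * (x ⬝ᵥ V⁻¹.mulVec x) ≤ 1) :
    (((1 : Matrix (Fin d) (Fin d) ℝ) - η • (V⁻¹ * vecMulVec x x)).mulVec (θ - θs)) ⬝ᵥ
        (V + η • vecMulVec x x).mulVec
          (((1 : Matrix (Fin d) (Fin d) ℝ) - η • (V⁻¹ * vecMulVec x x)).mulVec (θ - θs)) ≤
      (θ - θs) ⬝ᵥ V.mulVec (θ - θs) := by
  generalize θ - θs = u
  have hVw : V *ᵥ (V⁻¹ *ᵥ x) = x := by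
    rw [mulVec_mulVec, mul_nonsing_inv _ ((isUnit_iff_isUnit_det V).1 hV.isUnit), one_mulVec]
  have hs : 0 ≤ x ⬝ᵥ V⁻¹ *ᵥ x := hV.inv.posSemidef.dotProduct_mulVec_nonneg x
  rw [one_sub_smul_mul_vecMulVec_mulVec, dotProduct_add_smul_vecMulVec_mulVec,
    sub_smul_dotProduct_mulVec_sub_smul (isHermitian_iff_isSymm.1 hV.isHermitian) hVw,
    dotProduct_sub, dotProduct_smul, smul_eq_mul]
  nlinarith [mul_nonneg (mul_nonneg hη.le (sq_nonneg (x ⬝ᵥ u)))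
    (mul_nonneg (mul_nonneg hη.le hs) (sub_nonneg.2 hq)), mul_nonneg hη.le (sq_nonneg (x ⬝ᵥ u))]
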